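/- For every i = 0, …, n one has the identity S'_{2i} + (φ_{2i+1}/α_{2i+1}) · S'_{2i+2} = (1 + φ_{2i}/α_{2i}) · S'_{2i+1}. -/

import Mathlib

/-!
Write `r = φ / α`. Regrouping the pairs of factors, `S'_x` is the sum of the partial products
`r_x r_{x+1} ⋯ r_{x+m-1}` for `m < 2n+2`. Multiplying by `r_x` shifts these products by one:
`r_x S'_{x+1} + 1 = S'_x + P`, where `P` is the product of `r` over the whole cycle, hence
independent of `x`. Subtracting this relation at `x` from the one at `x + 1` gives the identity.
-/

open Finset

/-- `S'_x` (the same formula covers both even and odd indices `x` of `ZMod (2n+2)`):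
for `x = 2i` this is `S'_{2i}` and for `x = 2i+1` this is `S'_{2i+1}`. -/
noncomputable def Sp (n : ℕ) {K : Type*} [Field K] (α φ : ZMod (2*n+2) → K)
    (x : ZMod (2*n+2)) : K :=
  ∑ j ∈ range (n+1),
    (∏ k ∈ range j, (φ (x + 2*k) / α (x + 2*k)) * (φ (x + 2*k + 1) / α (x + 2*k + 1)))
      * (1 + φ (x + 2*j) / α (x + 2*j))

section PartialProducts

variable {R : Type*} [CommSemiring R]

def partialProdSum (r : ℕ → R) (L : ℕ) : R :=
  ∑ m ∈ range L, ∏ k ∈ range m, r k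

theorem mul_partialProdSum_succ_add_one (r : ℕ → R) (L : ℕ) :
    r 0 * partialProdSum (fun k => r (k + 1)) L + 1
      = partialProdSum r L + ∏ k ∈ range L, r k := by
  have hshift (m : ℕ) : r 0 * ∏ k ∈ range m, r (k + 1) = ∏ k ∈ range (m + 1), r k := by
    rw [prod_range_succ', mul_comm]
  simp only [partialProdSum, mul_sum, hshift]
  rw [← sum_range_succ, sum_range_succ' (fun m => ∏ k ∈ range m, r k), prod_range_zero]

theorem prod_range_two_mul (r : ℕ → R) (j : ℕ) :
    ∏ k ∈ range (2 * j), r k = ∏ k ∈ range j, r (2 * k) * r (2 * k + 1) := by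
  induction j with
  | zero => simp
  | succ j ih =>
    rw [Nat.mul_succ, prod_range_succ, prod_range_succ, prod_range_succ, ih, mul_assoc]

theorem partialProdSum_two_mul (r : ℕ → R) (L : ℕ) :
    partialProdSum r (2 * L)
      = ∑ j ∈ range L, (∏ k ∈ range j, r (2 * k) * r (2 * k + 1)) * (1 + r (2 * j)) := by
  induction L with
  | zero => simp [partialProdSum]
  | succ L ih =>
    rw [sum_range_succ, ← ih, partialProdSum, Nat.mul_succ, sum_range_succ, sum_range_succ,
      prod_range_succ, ← prod_range_two_mul, mul_one_add, add_assoc]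
    rfl

end PartialProducts

theorem prod_range_zmod_add_one_add {M : Type*} [CommMonoid M] {N : ℕ} (f : ZMod N → M)
    (x : ZMod N) :
    ∏ k ∈ range N, f (x + 1 + k) = ∏ k ∈ range N, f (x + k) := by
  cases N with
  | zero => simp
  | succ M =>
    rw [prod_range_succ, prod_range_succ' (fun k => f (x + k))]
    have hwrap : x + 1 + M = x + 0 := by
      rw [add_assoc, add_comm 1, ← Nat.cast_succ, ZMod.natCast_self]
    simp only [hwrap, Nat.cast_zero, Nat.cast_succ, add_assoc, add_comm (1 : ZMod _)]

section Cycle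

variable {R : Type*} [CommRing R] {N : ℕ}

def cycleSum (r : ZMod N → R) (x : ZMod N) : R :=
  partialProdSum (fun k => r (x + k)) N

theorem mul_cycleSum_add_one (r : ZMod N → R) (x : ZMod N) :
    r x * cycleSum r (x + 1) + 1 = cycleSum r x + ∏ k ∈ range N, r (x + k) := by
  have h := mul_partialProdSum_succ_add_one (fun k => r (x + k)) N
  simp only [Nat.cast_zero, add_zero, Nat.cast_succ, ← add_assoc, add_right_comm x _ 1] at h
  exact h

theorem cycleSum_add_mul_cycleSum_add_two (r : ZMod N → R) (x : ZMod N) :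
    cycleSum r x + r (x + 1) * cycleSum r (x + 2) = (1 + r x) * cycleSum r (x + 1) := by
  have h₀ := mul_cycleSum_add_one r x
  have h₁ := mul_cycleSum_add_one r (x + 1)
  rw [add_assoc x 1 1, one_add_one_eq_two, prod_range_zmod_add_one_add] at h₁
  linear_combination h₁ - h₀

end Cycle

theorem Sp_eq_cycleSum (n : ℕ) {K : Type*} [Field K] (α φ : ZMod (2*n+2) → K)
    (x : ZMod (2*n+2)) :
    Sp n α φ x = cycleSum (fun y => φ y / α y) x := by
  have h := partialProdSum_two_mul (fun k => φ (x + k) / α (x + k)) (n + 1)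
  rw [Nat.mul_succ] at h
  rw [cycleSum, h]
  push_cast
  simp only [Sp, add_assoc]

theorem stmt1_general (n : ℕ) (K : Type*) [Field K]
    (α φ : ZMod (2*n+2) → K) :
    ∀ i : ℕ, i ≤ n →
      Sp n α φ (2*i) + (φ (2*i+1) / α (2*i+1)) * Sp n α φ (2*i+2)
        = (1 + φ (2*i) / α (2*i)) * Sp n α φ (2*i+1) := by
  intro i _
  simp only [Sp_eq_cycleSum]
  exact cycleSum_add_mul_cycleSum_add_two _ _

/-- `S'_{2i} + (φ_{2i+1}/α_{2i+1}) S'_{2i+2} = (1 + φ_{2i}/α_{2i}) S'_{2i+1}`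
for `i = 0, …, n`. -/
theorem stmt1 (n : ℕ) (hn : 1 ≤ n) (K : Type*) [Field K]
    (α φ : ZMod (2*n+2) → K) (hα : ∀ i, α i ≠ 0) (hφ : ∀ i, φ i ≠ 0) :
    ∀ i : ℕ, i ≤ n →
      Sp n α φ (2*i) + (φ (2*i+1) / α (2*i+1)) * Sp n α φ (2*i+2)
        = (1 + φ (2*i) / α (2*i)) * Sp n α φ (2*i+1) :=
  stmt1_general n K α φ
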